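/- Additive separable structure of the value function under a randomized base policy (Lemma 4): let π be a randomized base policy on 𝒰. Suppose that for every (n,m) ∈ I there exist θ̂_{n,m} ∈ ℝ and V̂_{n,m} : {0,…,N_{n,m}} → ℝ satisfying, for all q ∈ {0,…,N_{n,m}}, θ̂_{n,m} + V̂_{n,m}(q) = Σ_{u∈𝒰} π(u)·[ g_{n,m}(q,u) + Σ_{A∈𝒜} P(A)·V̂_{n,m}(T_{n,m}(q,u,A_{n,m})) ]. Then θ̂ = Σ_{(n,m)∈I} θ̂_{n,m} and V̂(Q) = Σ_{(n,m)∈I} V̂_{n,m}(Q_{n,m}) satisfy, for all Q ∈ 𝒬, θ̂ + V̂(Q) = Σ_{u∈𝒰} π(u)·[ g(Q,u) + Σ_{A∈𝒜} P(A)·V̂(T(Q,u,A)) ]. -/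

import Mathlib

/-!
Under the global action `u`, queue `(n,m)` evolves by the per-queue map `T_{n,m}` driven by its own
arrivals, and the power term `w·p(u)` splits over the queues because each BS transmits at most one
content, which it caches. The policy-evaluation right-hand side is linear in the pair
(stage cost, value function), so the per-queue equations add up to the global one.
-/

open Finset

namespace HetNet

/-- The queue index set `I = {(n,m) : 0 ≤ n ≤ N, m ∈ M_n}`. -/
abbrev Idx {N M : ℕ} (cache : Fin (N + 1) → Finset (Fin M)) : Type :=
  {p : Fin (N + 1) × Fin M // p.2 ∈ cache p.1}

/-- The feasible action space `𝒰`: each BS schedules a cached content or idles (`none`),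
and the MBS (BS `0`) and the SBSs do not operate concurrently. -/
def Feasible {N M : ℕ} (cache : Fin (N + 1) → Finset (Fin M))
    (u : Fin (N + 1) → Option (Fin M)) : Prop :=
  (∀ n m, u n = some m → m ∈ cache n) ∧ (u 0 ≠ none → ∀ n, n ≠ 0 → u n = none)

instance {N M : ℕ} (cache : Fin (N + 1) → Finset (Fin M)) :
    DecidablePred (Feasible cache) := by
  intro u; unfold Feasible; infer_instance

instance {N M : ℕ} (cache : Fin (N + 1) → Finset (Fin M)) :
    Nonempty {u : Fin (N + 1) → Option (Fin M) // Feasible cache u} :=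
  ⟨⟨fun _ => none, fun _ _ h => absurd h.symm (Option.some_ne_none _), fun h => absurd rfl h⟩⟩

/-- Queue `(n,m)` is served by action `u`. -/
def Served {N M : ℕ} (u : Fin (N + 1) → Option (Fin M)) (n : Fin (N + 1)) (m : Fin M) : Prop :=
  (n = 0 ∧ u 0 = some m) ∨ (n ≠ 0 ∧ (u 0 = some m ∨ u n = some m))

instance {N M : ℕ} (u : Fin (N + 1) → Option (Fin M)) (n : Fin (N + 1)) (m : Fin M) :
    Decidable (Served u n m) := by unfold Served; infer_instance

/-- The queue transition map `T(Q,u,A)`. -/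
def T {N M : ℕ} {cache : Fin (N + 1) → Finset (Fin M)} (bound : Idx cache → ℕ)
    (Q : Idx cache → ℕ) (u : Fin (N + 1) → Option (Fin M)) (A : Idx cache → ℕ) :
    Idx cache → ℕ := fun i =>
  if Served u i.val.1 i.val.2 then min (A i) (bound i) else min (Q i + A i) (bound i)

/-- The network power cost `p(u) = Σ_n p(n, u_n)` (with `p(n,0) = 0` for an idling BS). -/
def pcost {N M : ℕ} (p : Fin (N + 1) → Fin M → ℝ) (u : Fin (N + 1) → Option (Fin M)) : ℝ :=
  ∑ n, (u n).elim 0 (p n)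

/-- The sum request queue length `d(Q)`. -/
def dcost {N M : ℕ} {cache : Fin (N + 1) → Finset (Fin M)} (Q : Idx cache → ℕ) : ℝ :=
  ∑ i, (Q i : ℝ)

/-- The per-stage cost `g(Q,u) = d(Q) + w·p(u)`. -/
def gcost {N M : ℕ} (p : Fin (N + 1) → Fin M → ℝ) (w : ℝ)
    {cache : Fin (N + 1) → Finset (Fin M)}
    (Q : Idx cache → ℕ) (u : Fin (N + 1) → Option (Fin M)) : ℝ :=
  dcost Q + w * pcost p u

/-- The state-action cost `J_V(Q,u) = g(Q,u) + Σ_{A∈𝒜} P(A)·V(T(Q,u,A))`. -/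
def Jcost {N M : ℕ} (p : Fin (N + 1) → Fin M → ℝ) (w : ℝ)
    {cache : Fin (N + 1) → Finset (Fin M)} (bound : Idx cache → ℕ)
    {ι : Type} [Fintype ι] (P : ι → ℝ) (A : ι → Idx cache → ℕ)
    (V : (Idx cache → ℕ) → ℝ) (Q : Idx cache → ℕ)
    (u : Fin (N + 1) → Option (Fin M)) : ℝ :=
  gcost p w Q u + ∑ a, P a * V (T bound Q u (A a))

/-- The per-queue transition map `T_{n,m}(q,u,a)`. -/
def Tq {N M : ℕ} {cache : Fin (N + 1) → Finset (Fin M)} (bound : Idx cache → ℕ)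
    (i : Idx cache) (q : ℕ) (u : Fin (N + 1) → Option (Fin M)) (a : ℕ) : ℕ :=
  if Served u i.val.1 i.val.2 then min a (bound i) else min (q + a) (bound i)

lemma sum_subtype_ite_some_eq_sum_elim {α β R : Type*} [Fintype α] [Fintype β] [DecidableEq β]
    [AddCommMonoid R] (s : α → Finset β) (f : α → Option β)
    (hf : ∀ a b, f a = some b → b ∈ s a) (g : α → β → R) :
    ∑ x : {x : α × β // x.2 ∈ s x.1}, (if f x.val.1 = some x.val.2 then g x.val.1 x.val.2 else 0)
      = ∑ a, (f a).elim 0 (g a) := by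
  rw [← Finset.sum_subtype (univ.filter fun x : α × β => x.2 ∈ s x.1) (by simp)
    (fun x => if f x.1 = some x.2 then g x.1 x.2 else 0), sum_filter, Fintype.sum_prod_type]
  refine sum_congr rfl fun a _ => ?_
  cases hfa : f a with
  | none => simp [hfa]
  | some b => simp [hfa, sum_ite_eq, hf a b hfa]

lemma sum_queue_cost_eq_gcost {N M : ℕ} {cache : Fin (N + 1) → Finset (Fin M)}
    (p : Fin (N + 1) → Fin M → ℝ) (w : ℝ) (Q : Idx cache → ℕ)
    {u : Fin (N + 1) → Option (Fin M)} (hu : ∀ n m, u n = some m → m ∈ cache n) :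
    ∑ i : Idx cache, ((Q i : ℝ) + w * (if u i.val.1 = some i.val.2 then p i.val.1 i.val.2 else 0))
      = gcost p w Q u := by
  rw [sum_add_distrib, ← mul_sum, sum_subtype_ite_some_eq_sum_elim cache u hu p]
  rfl

lemma sum_policy_step_eq {ι υ α : Type*} [Fintype υ] [Fintype α] (s : Finset ι)
    (π : υ → ℝ) (P : α → ℝ) (c : ι → υ → ℝ) (v : ι → υ → α → ℝ) :
    ∑ i ∈ s, ∑ u, π u * (c i u + ∑ a, P a * v i u a)
      = ∑ u, π u * (∑ i ∈ s, c i u + ∑ a, P a * ∑ i ∈ s, v i u a) := by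
  rw [sum_comm]
  refine sum_congr rfl fun u _ => ?_
  rw [← mul_sum, sum_add_distrib, sum_comm]
  simp only [mul_sum]

theorem additive_separable_structure_general {N M : ℕ} (cache : Fin (N + 1) → Finset (Fin M))
    (bound : Idx cache → ℕ)
    (p : Fin (N + 1) → Fin M → ℝ)
    (w : ℝ)
    {ι : Type} [Fintype ι] (P : ι → ℝ) (A : ι → Idx cache → ℕ)
    (π : {u : Fin (N + 1) → Option (Fin M) // Feasible cache u} → ℝ)
    (θv : Idx cache → ℝ) (Vv : (i : Idx cache) → ℕ → ℝ)
    (hper : ∀ i : Idx cache, ∀ q ≤ bound i,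
      θv i + Vv i q =
        ∑ u : {u : Fin (N + 1) → Option (Fin M) // Feasible cache u}, π u *
          (((q : ℝ) + w * (if u.val i.val.1 = some i.val.2 then p i.val.1 i.val.2 else 0)) +
            ∑ a, P a * Vv i (Tq bound i q u.val (A a i)))) :
    ∀ Q : Idx cache → ℕ, (∀ i, Q i ≤ bound i) →
      (∑ i, θv i) + (∑ i, Vv i (Q i)) =
        ∑ u : {u : Fin (N + 1) → Option (Fin M) // Feasible cache u}, π u *
          (gcost p w Q u.val + ∑ a, P a * ∑ i, Vv i (T bound Q u.val (A a) i)) := by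
  intro Q hQ
  rw [← sum_add_distrib, sum_congr rfl fun i _ => hper i (Q i) (hQ i), sum_policy_step_eq]
  refine sum_congr rfl fun u _ => ?_
  rw [sum_queue_cost_eq_gcost p w Q u.property.1]
  -- the global transition `T` acts on queue `i` as `Tq`, definitionally
  rfl

/-- Lemma 4: additive separable structure of the value function under a
randomized base policy `π`: if for every `(n,m) ∈ I` there are `θ̂_{n,m}` and `V̂_{n,m}`
solving the per-BS-content fixed point equation, then `θ̂ = Σ θ̂_{n,m}` and
`V̂(Q) = Σ V̂_{n,m}(Q_{n,m})` solve the corresponding fixed point equation of `π` on `𝒬`. -/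
theorem additive_separable_structure {N M : ℕ} (cache : Fin (N + 1) → Finset (Fin M))
    (hcache0 : ∀ m : Fin M, m ∈ cache 0)
    (bound : Idx cache → ℕ)
    (p : Fin (N + 1) → Fin M → ℝ) (hp : ∀ n m, 0 ≤ p n m)
    (w : ℝ) (hw : 0 ≤ w)
    {ι : Type} [Fintype ι] (P : ι → ℝ) (A : ι → Idx cache → ℕ)
    (hP : ∀ a, 0 ≤ P a) (hPsum : ∑ a, P a = 1)
    (π : {u : Fin (N + 1) → Option (Fin M) // Feasible cache u} → ℝ)
    (hπ : ∀ u, 0 ≤ π u) (hπsum : ∑ u, π u = 1)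
    (θv : Idx cache → ℝ) (Vv : (i : Idx cache) → ℕ → ℝ)
    (hper : ∀ i : Idx cache, ∀ q ≤ bound i,
      θv i + Vv i q =
        ∑ u : {u : Fin (N + 1) → Option (Fin M) // Feasible cache u}, π u *
          (((q : ℝ) + w * (if u.val i.val.1 = some i.val.2 then p i.val.1 i.val.2 else 0)) +
            ∑ a, P a * Vv i (Tq bound i q u.val (A a i)))) :
    ∀ Q : Idx cache → ℕ, (∀ i, Q i ≤ bound i) →
      (∑ i, θv i) + (∑ i, Vv i (Q i)) =
        ∑ u : {u : Fin (N + 1) → Option (Fin M) // Feasible cache u}, π u *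
          (gcost p w Q u.val + ∑ a, P a * ∑ i, Vv i (T bound Q u.val (A a) i)) :=
  additive_separable_structure_general cache bound p w P A π θv Vv hper

end HetNet
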